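/- Let H be a commutative Hopf algebra over a commutative ring R. For every n ≥ 1, the map ι_n : H^{⊗(n−1)} → H^{⊗n} is injective and its image is exactly the set of coinvariants {z ∈ H^{⊗n} : δ_n(z) = 1 ⊗ z}; in other words, ι_n is an equalizer of the diagonal coaction δ_n and the map z ↦ 1 ⊗ z. -/

import Mathlib

open TensorProduct

/-- The iterated tensor power `H^{⊗n}`, modelled as `H ⊗ (H ⊗ (⋯ ⊗ R))`. -/
noncomputable def Tpow (R H : Type) [CommRing R] [CommRing H] [Algebra R H] :
    ℕ → ModuleCat R
  | 0 => ModuleCat.of R R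
  | n + 1 => ModuleCat.of R (H ⊗[R] (Tpow R H n))

variable (R H : Type) [CommRing R] [CommRing H] [HopfAlgebra R H]

/-- Multiplication of an extra copy of `H` into the first tensor factor of `H^{⊗(n+1)}`. -/
noncomputable def mulFirst (n : ℕ) :
    (H ⊗[R] (Tpow R H (n + 1))) →ₗ[R] (Tpow R H (n + 1)) :=
  LinearMap.rTensor (Tpow R H n) (LinearMap.mul' R H) ∘ₗ
    (TensorProduct.assoc R H H (Tpow R H n)).symm.toLinearMap

/-- The map `ι_n : H^{⊗n} → H^{⊗(n+1)}`,
`a₁ ⊗ ⋯ ⊗ aₙ ↦ S(a₁₍₁₎) ⊗ a₁₍₂₎S(a₂₍₁₎) ⊗ ⋯ ⊗ aₙ₍₂₎` (for `n = 0` the unit map). -/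
noncomputable def iotaMap : (n : ℕ) → ((Tpow R H n) →ₗ[R] (Tpow R H (n + 1)))
  | 0 => (TensorProduct.mk R H R).flip (1 : R) ∘ₗ Algebra.linearMap R H
  | n + 1 =>
      LinearMap.lTensor H (mulFirst R H n) ∘ₗ
      (TensorProduct.assoc R H H (Tpow R H (n + 1))).toLinearMap ∘ₗ
      LinearMap.rTensor (Tpow R H (n + 1))
        (LinearMap.rTensor H (HopfAlgebra.antipode (R := R) (A := H))) ∘ₗ
      LinearMap.rTensor (Tpow R H (n + 1)) (Coalgebra.comul (R := R) (A := H)) ∘ₗ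
      LinearMap.lTensor H (iotaMap n)

/-- The diagonal coaction `δ_n : H^{⊗n} → H ⊗ H^{⊗n}`,
`x₁ ⊗ ⋯ ⊗ xₙ ↦ x₁₍₁₎⋯xₙ₍₁₎ ⊗ x₁₍₂₎ ⊗ ⋯ ⊗ xₙ₍₂₎`. -/
noncomputable def deltaMap : (n : ℕ) → ((Tpow R H n) →ₗ[R] H ⊗[R] (Tpow R H n))
  | 0 => TensorProduct.mk R H R 1
  | n + 1 =>
      (LinearMap.rTensor (H ⊗[R] (Tpow R H n)) (LinearMap.mul' R H) ∘ₗ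
      (TensorProduct.tensorTensorTensorComm R H H H (Tpow R H n)).toLinearMap ∘ₗ
      TensorProduct.map (Coalgebra.comul (R := R) (A := H)) (deltaMap n) :
        H ⊗[R] (Tpow R H n) →ₗ[R] H ⊗[R] (H ⊗[R] (Tpow R H n)))

-- ### Auxiliary developments


open Coalgebra HopfAlgebra

section ConvSection
variable {R H}
variable {L : Type} [CommRing L] [Algebra R L]


/-- Convolution product on linear maps from a coalgebra to an algebra. -/
noncomputable def conv (f g : H →ₗ[R] L) : H →ₗ[R] L :=
  LinearMap.mul' R L ∘ₗ TensorProduct.map f g ∘ₗ Coalgebra.comul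

lemma conv_repr (f g : H →ₗ[R] L) {a : H} {ι : Type*} (r : Coalgebra.Repr R a ι) :
    conv f g a = ∑ i ∈ r.index, f (r.left i) * g (r.right i) := by
  simp only [conv, LinearMap.comp_apply, ← r.eq, map_sum, TensorProduct.map_tmul,
    LinearMap.mul'_apply]

/-- counit-unit convolution identity element -/
noncomputable def convOne : H →ₗ[R] L := Algebra.linearMap R L ∘ₗ Coalgebra.counit

lemma sum_counit_smul {a : H} {ι : Type*} (r : Coalgebra.Repr R a ι) :
    ∑ i ∈ r.index, Coalgebra.counit (R := R) (r.left i) • r.right i = a := by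
  have h := Coalgebra.sum_counit_tmul_eq r
  calc ∑ i ∈ r.index, Coalgebra.counit (R := R) (r.left i) • r.right i
      = TensorProduct.lid R H (∑ i ∈ r.index, Coalgebra.counit (R := R) (r.left i) ⊗ₜ[R] r.right i) := by
        rw [map_sum]; simp
    _ = TensorProduct.lid R H ((1 : R) ⊗ₜ[R] a) := by rw [h]
    _ = a := by simp

lemma sum_smul_counit {a : H} {ι : Type*} (r : Coalgebra.Repr R a ι) :
    ∑ i ∈ r.index, Coalgebra.counit (R := R) (r.right i) • r.left i = a := by
  have h := Coalgebra.sum_tmul_counit_eq r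
  calc ∑ i ∈ r.index, Coalgebra.counit (R := R) (r.right i) • r.left i
      = TensorProduct.rid R H (∑ i ∈ r.index, r.left i ⊗ₜ[R] Coalgebra.counit (R := R) (r.right i)) := by
        rw [map_sum]; simp
    _ = TensorProduct.rid R H (a ⊗ₜ[R] (1 : R)) := by rw [h]
    _ = a := by simp

lemma conv_one_left (f : H →ₗ[R] L) : conv convOne f = f := by
  ext a
  rw [conv_repr _ _ (ℛ R a)]
  simp only [convOne, LinearMap.comp_apply, Algebra.linearMap_apply]
  calc ∑ i ∈ (ℛ R a).index, algebraMap R L (counit ((ℛ R a).left i)) * f ((ℛ R a).right i)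
      = ∑ i ∈ (ℛ R a).index, f (counit (R := R) ((ℛ R a).left i) • (ℛ R a).right i) := by
        simp only [← Algebra.smul_def, ← map_smul]
    _ = f a := by rw [← map_sum, _root_.sum_counit_smul]

lemma conv_one_right (f : H →ₗ[R] L) : conv f convOne = f := by
  ext a
  rw [conv_repr _ _ (ℛ R a)]
  simp only [convOne, LinearMap.comp_apply, Algebra.linearMap_apply]
  calc ∑ i ∈ (ℛ R a).index, f ((ℛ R a).left i) * algebraMap R L (counit ((ℛ R a).right i))
      = ∑ i ∈ (ℛ R a).index, f (counit (R := R) ((ℛ R a).right i) • (ℛ R a).left i) := by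
        simp only [← Algebra.commutes, ← Algebra.smul_def, ← map_smul]
    _ = f a := by rw [← map_sum, sum_smul_counit]

lemma conv_assoc (f g h : H →ₗ[R] L) : conv (conv f g) h = conv f (conv g h) := by
  ext a
  rw [conv_repr _ _ (ℛ R a), conv_repr _ _ (ℛ R a)]
  have key := Coalgebra.sum_tmul_tmul_eq (ℛ R a) (fun i => ℛ R ((ℛ R a).left i))
    (fun i => ℛ R ((ℛ R a).right i))
  -- apply the trilinear collapse x ⊗ (y ⊗ z) ↦ f x * (g y * h z)
  have := congrArg (LinearMap.mul' R L ∘ₗ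
    TensorProduct.map f (LinearMap.mul' R L ∘ₗ TensorProduct.map g h)) key
  simp only [map_sum, LinearMap.comp_apply, TensorProduct.map_tmul,
    LinearMap.mul'_apply] at this
  calc ∑ i ∈ (ℛ R a).index, conv f g ((ℛ R a).left i) * h ((ℛ R a).right i)
      = ∑ i ∈ (ℛ R a).index, ∑ j ∈ (ℛ R ((ℛ R a).left i)).index,
          f ((ℛ R ((ℛ R a).left i)).left j) * ((g ((ℛ R ((ℛ R a).left i)).right j)) *
            h ((ℛ R a).right i)) := by
        refine Finset.sum_congr rfl fun i _ => ?_
        rw [conv_repr _ _ (ℛ R ((ℛ R a).left i)), Finset.sum_mul]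
        exact Finset.sum_congr rfl fun j _ => by ring
    _ = ∑ i ∈ (ℛ R a).index, ∑ j ∈ (ℛ R ((ℛ R a).right i)).index,
          f ((ℛ R a).left i) * (g ((ℛ R ((ℛ R a).right i)).left j) *
            h ((ℛ R ((ℛ R a).right i)).right j)) := this
    _ = ∑ i ∈ (ℛ R a).index, f ((ℛ R a).left i) * conv g h ((ℛ R a).right i) := by
        refine Finset.sum_congr rfl fun i _ => ?_
        rw [conv_repr _ _ (ℛ R ((ℛ R a).right i)), Finset.mul_sum]

lemma alghom_comp_conv {L' : Type} [CommRing L'] [Algebra R L'] (φ : L →ₐ[R] L')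
    (f g : H →ₗ[R] L) :
    φ.toLinearMap ∘ₗ conv f g = conv (φ.toLinearMap ∘ₗ f) (φ.toLinearMap ∘ₗ g) := by
  ext a
  simp only [LinearMap.comp_apply, conv_repr _ _ (ℛ R a), map_sum, map_mul, AlgHom.toLinearMap_apply]






lemma conv_alghom_antipode_left (φ : H →ₐ[R] L) :
    conv (φ.toLinearMap ∘ₗ antipode (R := R)) φ.toLinearMap = convOne := by
  ext a
  rw [conv_repr _ _ (ℛ R a)]
  simp only [LinearMap.comp_apply, convOne, Algebra.linearMap_apply, AlgHom.toLinearMap_apply]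
  rw [show ∑ i ∈ (ℛ R a).index, φ (antipode (R := R) ((ℛ R a).left i)) * φ ((ℛ R a).right i)
        = φ (∑ i ∈ (ℛ R a).index, antipode (R := R) ((ℛ R a).left i) * (ℛ R a).right i) by
    rw [map_sum]; exact Finset.sum_congr rfl fun i _ => (map_mul φ _ _).symm]
  rw [HopfAlgebra.sum_antipode_mul_eq_algebraMap_counit (ℛ R a), AlgHom.commutes]

lemma conv_alghom_antipode_right (φ : H →ₐ[R] L) :
    conv φ.toLinearMap (φ.toLinearMap ∘ₗ antipode (R := R)) = convOne := by
  ext a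
  rw [conv_repr _ _ (ℛ R a)]
  simp only [LinearMap.comp_apply, convOne, Algebra.linearMap_apply, AlgHom.toLinearMap_apply]
  rw [show ∑ i ∈ (ℛ R a).index, φ ((ℛ R a).left i) * φ (antipode (R := R) ((ℛ R a).right i))
      = φ (∑ i ∈ (ℛ R a).index, (ℛ R a).left i * antipode (R := R) ((ℛ R a).right i)) by
    rw [map_sum]; exact Finset.sum_congr rfl fun i _ => (map_mul φ _ _).symm]
  rw [HopfAlgebra.sum_mul_antipode_eq_algebraMap_counit (ℛ R a), AlgHom.commutes]


end ConvSection

section P1Section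


noncomputable def e1L : H →ₗ[R] H ⊗[R] H :=
  (Algebra.TensorProduct.includeLeft : H →ₐ[R] H ⊗[R] H).toLinearMap

noncomputable def e2L : H →ₗ[R] H ⊗[R] H :=
  (Algebra.TensorProduct.includeRight : H →ₐ[R] H ⊗[R] H).toLinearMap

lemma comul_eq_conv : (Coalgebra.comul : H →ₗ[R] H ⊗[R] H) = conv (e1L R H) (e2L R H) := by
  ext a
  rw [conv_repr _ _ (ℛ R a)]
  simp only [e1L, e2L, AlgHom.toLinearMap_apply, Algebra.TensorProduct.includeLeft_apply,
    Algebra.TensorProduct.includeRight_apply, Algebra.TensorProduct.tmul_mul_tmul,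
    mul_one, one_mul]
  exact ((ℛ R a).eq).symm

lemma comulAlgHom_toLinearMap :
    (Bialgebra.comulAlgHom R H).toLinearMap = (Coalgebra.comul : H →ₗ[R] H ⊗[R] H) := rfl

/-- anticomultiplicativity of the antipode, in convolution form -/
theorem antipode_comul_conv :
    (Coalgebra.comul ∘ₗ antipode (R := R) : H →ₗ[R] H ⊗[R] H) =
      conv (e2L R H ∘ₗ antipode (R := R)) (e1L R H ∘ₗ antipode (R := R)) := by
  set g' := conv (e2L R H ∘ₗ antipode (R := R)) (e1L R H ∘ₗ antipode (R := R)) with hg'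
  have h1 : conv ((Coalgebra.comul : H →ₗ[R] H ⊗[R] H) ∘ₗ antipode (R := R))
      (Coalgebra.comul : H →ₗ[R] H ⊗[R] H) = convOne := by
    have := conv_alghom_antipode_left (Bialgebra.comulAlgHom R H)
    rwa [comulAlgHom_toLinearMap] at this
  have h2 : conv (Coalgebra.comul : H →ₗ[R] H ⊗[R] H) g' = convOne := by
    rw [comul_eq_conv, hg', conv_assoc, ← conv_assoc (e2L R H)]
    rw [show conv (e2L R H) (e2L R H ∘ₗ antipode (R := R)) = convOne from
      conv_alghom_antipode_right (Algebra.TensorProduct.includeRight : H →ₐ[R] H ⊗[R] H)]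
    rw [conv_one_left]
    exact conv_alghom_antipode_right (Algebra.TensorProduct.includeLeft : H →ₐ[R] H ⊗[R] H)
  calc (Coalgebra.comul ∘ₗ antipode (R := R) : H →ₗ[R] H ⊗[R] H)
      = conv (Coalgebra.comul ∘ₗ antipode (R := R) : H →ₗ[R] H ⊗[R] H) convOne :=
        (conv_one_right _).symm
    _ = conv (Coalgebra.comul ∘ₗ antipode (R := R) : H →ₗ[R] H ⊗[R] H)
          (conv (Coalgebra.comul : H →ₗ[R] H ⊗[R] H) g') := by rw [h2]
    _ = conv (conv ((Coalgebra.comul : H →ₗ[R] H ⊗[R] H) ∘ₗ antipode (R := R))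
          (Coalgebra.comul : H →ₗ[R] H ⊗[R] H)) g' := (conv_assoc _ _ _).symm
    _ = conv convOne g' := by rw [h1]
    _ = g' := conv_one_left _

-- triple tensor embeddings
noncomputable def k1L : H →ₗ[R] H ⊗[R] (H ⊗[R] H) :=
  (Algebra.TensorProduct.includeLeft : H →ₐ[R] H ⊗[R] (H ⊗[R] H)).toLinearMap

noncomputable def k2A : H →ₐ[R] H ⊗[R] (H ⊗[R] H) :=
  (Algebra.TensorProduct.includeRight : (H ⊗[R] H) →ₐ[R] H ⊗[R] (H ⊗[R] H)).comp
    (Algebra.TensorProduct.includeLeft : H →ₐ[R] H ⊗[R] H)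

noncomputable def k3L : H →ₗ[R] H ⊗[R] (H ⊗[R] H) :=
  ((Algebra.TensorProduct.includeRight : (H ⊗[R] H) →ₐ[R] H ⊗[R] (H ⊗[R] H)).comp
    (Algebra.TensorProduct.includeRight : H →ₐ[R] H ⊗[R] H)).toLinearMap

noncomputable def emb12 : (H ⊗[R] H) →ₐ[R] H ⊗[R] (H ⊗[R] H) :=
  Algebra.TensorProduct.map (AlgHom.id R H)
    (Algebra.TensorProduct.includeLeft : H →ₐ[R] H ⊗[R] H)

lemma emb12_e1 : (emb12 R H).toLinearMap ∘ₗ (e1L R H ∘ₗ antipode (R := R)) =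
    k1L R H ∘ₗ antipode (R := R) := by
  ext a
  simp [emb12, e1L, k1L, Algebra.TensorProduct.one_def]

lemma emb12_e2 : (emb12 R H).toLinearMap ∘ₗ (e2L R H ∘ₗ antipode (R := R)) =
    (k2A R H).toLinearMap ∘ₗ antipode (R := R) := by
  ext a
  simp [emb12, e2L, k2A, Algebra.TensorProduct.one_def]

/-- the star identity -/
theorem star_conv :
    conv ((emb12 R H).toLinearMap ∘ₗ Coalgebra.comul ∘ₗ antipode (R := R))
        (conv (k1L R H) (k3L R H)) =
      conv ((k2A R H).toLinearMap ∘ₗ antipode (R := R)) (k3L R H) := by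
  rw [antipode_comul_conv, alghom_comp_conv, emb12_e1, emb12_e2]
  rw [conv_assoc, ← conv_assoc (k1L R H ∘ₗ antipode (R := R))]
  rw [show conv (k1L R H ∘ₗ antipode (R := R)) (k1L R H) = convOne from
    conv_alghom_antipode_left (Algebra.TensorProduct.includeLeft : H →ₐ[R] H ⊗[R] (H ⊗[R] H))]
  rw [conv_one_left]


end P1Section

-- ### basic unfolding lemmas


lemma mulFirst_tmul (n : ℕ) (h x : H) (b : Tpow R H n) :
    mulFirst R H n (h ⊗ₜ[R] (x ⊗ₜ[R] b)) = (h * x) ⊗ₜ[R] b := rfl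

lemma mulFirst_rTensor (n : ℕ) (k : H) (z : H ⊗[R] Tpow R H n) :
    mulFirst R H n (k ⊗ₜ[R] z) = (LinearMap.mulLeft R k).rTensor (Tpow R H n) z := by
  induction z using TensorProduct.induction_on with
  | zero => erw [TensorProduct.tmul_zero, map_zero]
  | tmul x b => rfl
  | add u v hu hv => erw [TensorProduct.tmul_add, map_add, map_add, hu, hv]; rfl

noncomputable def gmap (n : ℕ) :
    ((H ⊗[R] H) ⊗[R] (H ⊗[R] Tpow R H n)) →ₗ[R] (H ⊗[R] (H ⊗[R] Tpow R H n)) :=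
  (LinearMap.mul' R H).rTensor (H ⊗[R] Tpow R H n) ∘ₗ
    (TensorProduct.tensorTensorTensorComm R H H H (Tpow R H n)).toLinearMap

lemma gmap_tmul (n : ℕ) (p q c : H) (d : Tpow R H n) :
    gmap R H n ((p ⊗ₜ[R] q) ⊗ₜ[R] (c ⊗ₜ[R] d)) = (p * c) ⊗ₜ[R] (q ⊗ₜ[R] d) := by
  simp [gmap]

lemma delta_succ (n : ℕ) :
    deltaMap R H (n + 1) =
      gmap R H n ∘ₗ TensorProduct.map (Coalgebra.comul (R := R) (A := H)) (deltaMap R H n) := by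
  rfl

lemma delta_succ_tmul (n : ℕ) (x : H) (b : Tpow R H n) :
    deltaMap R H (n + 1) (x ⊗ₜ[R] b) =
      gmap R H n ((Coalgebra.comul (R := R) x) ⊗ₜ[R] deltaMap R H n b) := rfl

lemma iota_succ (n : ℕ) (h : H) (b : Tpow R H n) :
    iotaMap R H (n + 1) (h ⊗ₜ[R] b) =
      ∑ i ∈ (ℛ R h).index, antipode (R := R) ((ℛ R h).left i) ⊗ₜ[R]
        ((LinearMap.mulLeft R ((ℛ R h).right i)).rTensor (Tpow R H n) (iotaMap R H n b)) := by
  show (LinearMap.lTensor H (mulFirst R H n) ∘ₗ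
      (TensorProduct.assoc R H H (Tpow R H (n + 1))).toLinearMap ∘ₗ
      LinearMap.rTensor (Tpow R H (n + 1))
        (LinearMap.rTensor H (HopfAlgebra.antipode (R := R) (A := H))) ∘ₗ
      LinearMap.rTensor (Tpow R H (n + 1)) (Coalgebra.comul (R := R) (A := H)) ∘ₗ
      LinearMap.lTensor H (iotaMap R H n)) (h ⊗ₜ[R] b) = _
  simp only [LinearMap.comp_apply, LinearMap.lTensor_tmul, LinearMap.rTensor_tmul]
  rw [← (ℛ R h).eq]
  simp only [TensorProduct.sum_tmul, map_sum, LinearMap.rTensor_tmul, LinearEquiv.coe_coe,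
    TensorProduct.assoc_tmul, LinearMap.lTensor_tmul]
  exact Finset.sum_congr rfl fun i _ => by erw [mulFirst_rTensor]; rfl

lemma iota_zero (a : Tpow R H 0) :
    iotaMap R H 0 a = (algebraMap R H a) ⊗ₜ[R] (1 : R) := rfl

lemma delta_zero (x : Tpow R H 0) : deltaMap R H 0 x = (1 : H) ⊗ₜ[R] x := rfl

lemma gmap_mul_tmul (n : ℕ) (u v : H) (q : H ⊗[R] H) (w : H ⊗[R] Tpow R H n) :
    gmap R H n (((u ⊗ₜ[R] v) * q) ⊗ₜ[R] w) =
      TensorProduct.map (LinearMap.mulLeft R u)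
        ((LinearMap.mulLeft R v).rTensor (Tpow R H n)) (gmap R H n (q ⊗ₜ[R] w)) := by
  induction q using TensorProduct.induction_on with
  | zero => simp
  | tmul c d =>
    induction w using TensorProduct.induction_on with
    | zero => simp
    | tmul e f =>
      rw [Algebra.TensorProduct.tmul_mul_tmul, gmap_tmul, gmap_tmul, TensorProduct.map_tmul]
      simp [mul_assoc]
    | add w₁ w₂ h₁ h₂ =>
      rw [TensorProduct.tmul_add, TensorProduct.tmul_add, map_add, map_add, h₁, h₂, map_add]
  | add q₁ q₂ h₁ h₂ =>
    rw [mul_add, TensorProduct.add_tmul, TensorProduct.add_tmul, map_add, map_add, h₁, h₂,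
      map_add]

lemma lemmaB (n : ℕ) (k : H) (z : H ⊗[R] Tpow R H n) :
    deltaMap R H (n + 1) ((LinearMap.mulLeft R k).rTensor (Tpow R H n) z) =
      ∑ i ∈ (ℛ R k).index,
        TensorProduct.map (LinearMap.mulLeft R ((ℛ R k).left i))
          ((LinearMap.mulLeft R ((ℛ R k).right i)).rTensor (Tpow R H n))
          (deltaMap R H (n + 1) z) := by
  induction z using TensorProduct.induction_on with
  | zero => rw [map_zero]; erw [map_zero]; exact (Finset.sum_eq_zero fun i _ => map_zero _).symm
  | tmul x b =>
    rw [LinearMap.rTensor_tmul, LinearMap.mulLeft_apply, delta_succ_tmul, delta_succ_tmul]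
    rw [Bialgebra.comul_mul, ← (ℛ R k).eq, Finset.sum_mul, TensorProduct.sum_tmul, map_sum]
    exact Finset.sum_congr rfl fun i _ => gmap_mul_tmul R H n _ _ _ _
  | add z₁ z₂ h₁ h₂ =>
    rw [map_add]; erw [map_add]; rw [h₁, h₂]; erw [← Finset.sum_add_distrib]
    exact Finset.sum_congr rfl fun i _ => by erw [map_add, map_add]; rfl



lemma plumb1 (n : ℕ) (b : Tpow R H n) (u : H ⊗[R] H) (v w : H) :
    (LinearMap.lTensor H (LinearMap.lTensor H (mulFirst R H n ∘ₗ
        (TensorProduct.mk R H (Tpow R H (n + 1))).flip (iotaMap R H n b))))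
      ((emb12 R H u) * (v ⊗ₜ[R] ((1 : H) ⊗ₜ[R] w))) =
    gmap R H (n + 1) (u ⊗ₜ[R] (v ⊗ₜ[R]
      ((LinearMap.mulLeft R w).rTensor (Tpow R H n) (iotaMap R H n b)))) := by
  induction u using TensorProduct.induction_on with
  | zero => simp
  | tmul p q =>
    simp only [emb12, Algebra.TensorProduct.map_tmul, AlgHom.coe_id, id_eq,
      Algebra.TensorProduct.includeLeft_apply, Algebra.TensorProduct.tmul_mul_tmul,
      one_mul, mul_one, LinearMap.lTensor_tmul, LinearMap.comp_apply,
      TensorProduct.mk_apply, LinearMap.flip_apply, gmap_tmul]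
    erw [mulFirst_rTensor, gmap_tmul]
  | add u₁ u₂ h₁ h₂ => rw [map_add, add_mul, map_add, h₁, h₂, TensorProduct.add_tmul, map_add]

lemma kappa_apply (x : H) :
    conv (k1L R H) (k3L R H) x =
      ∑ j ∈ (ℛ R x).index, (ℛ R x).left j ⊗ₜ[R] ((1 : H) ⊗ₜ[R] (ℛ R x).right j) := by
  rw [conv_repr _ _ (ℛ R x)]
  refine Finset.sum_congr rfl fun j _ => ?_
  simp [k1L, k3L, Algebra.TensorProduct.one_def, Algebra.TensorProduct.tmul_mul_tmul]

lemma k2k3_apply (x : H) :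
    conv ((k2A R H).toLinearMap ∘ₗ antipode (R := R)) (k3L R H) x =
      ∑ j ∈ (ℛ R x).index,
        (1 : H) ⊗ₜ[R] ((antipode (R := R) ((ℛ R x).left j)) ⊗ₜ[R] (ℛ R x).right j) := by
  rw [conv_repr _ _ (ℛ R x)]
  refine Finset.sum_congr rfl fun j _ => ?_
  simp [k2A, k3L, Algebra.TensorProduct.one_def, Algebra.TensorProduct.tmul_mul_tmul]

lemma lemmaA : ∀ (n : ℕ) (a : Tpow R H n),
    deltaMap R H (n + 1) (iotaMap R H n a) = (1 : H) ⊗ₜ[R] (iotaMap R H n a) := by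
  intro n
  induction n with
  | zero =>
    intro a
    erw [iota_zero, delta_succ_tmul, delta_zero]
    erw [Bialgebra.comul_algebraMap, Algebra.TensorProduct.algebraMap_apply, gmap_tmul]
    erw [mul_one, Algebra.algebraMap_eq_smul_one, TensorProduct.smul_tmul,
      TensorProduct.smul_tmul']
    rfl
  | succ n ih =>
    have key : ∀ (h : H) (b : Tpow R H n),
        deltaMap R H (n + 2) (iotaMap R H (n + 1) (h ⊗ₜ[R] b)) =
          (1 : H) ⊗ₜ[R] (iotaMap R H (n + 1) (h ⊗ₜ[R] b)) := by
      intro h b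
      set L := LinearMap.lTensor H (LinearMap.lTensor H (mulFirst R H n ∘ₗ
        (TensorProduct.mk R H (Tpow R H (n + 1))).flip (iotaMap R H n b))) with hL
      have main : deltaMap R H (n + 2) (iotaMap R H (n + 1) (h ⊗ₜ[R] b)) =
          L (conv ((emb12 R H).toLinearMap ∘ₗ Coalgebra.comul ∘ₗ antipode (R := R))
              (conv (k1L R H) (k3L R H)) h) := by
        rw [conv_repr _ _ (ℛ R h)]
        rw [iota_succ, map_sum]; erw [map_sum]
        refine Finset.sum_congr rfl fun i _ => ?_
        -- term i
        erw [delta_succ_tmul]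
        have hdel : deltaMap R H (n + 1)
            ((LinearMap.mulLeft R ((ℛ R h).right i)).rTensor (Tpow R H n) (iotaMap R H n b)) =
            ∑ j ∈ (ℛ R ((ℛ R h).right i)).index,
              (ℛ R ((ℛ R h).right i)).left j ⊗ₜ[R]
                ((LinearMap.mulLeft R ((ℛ R ((ℛ R h).right i)).right j)).rTensor (Tpow R H n)
                  (iotaMap R H n b)) := by
          erw [lemmaB, ih b]
          exact Finset.sum_congr rfl fun j _ => by
            erw [TensorProduct.map_tmul, LinearMap.mulLeft_apply, mul_one]
        rw [hdel]; erw [TensorProduct.tmul_sum, map_sum]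
        rw [LinearMap.comp_apply, LinearMap.comp_apply, AlgHom.toLinearMap_apply,
          kappa_apply, Finset.mul_sum, map_sum]
        exact Finset.sum_congr rfl fun j _ => (plumb1 R H n b _ _ _).symm
      rw [main, star_conv, k2k3_apply, map_sum, iota_succ]; erw [TensorProduct.tmul_sum]
      refine Finset.sum_congr rfl fun i _ => ?_
      rw [hL]
      simp only [LinearMap.lTensor_tmul, LinearMap.comp_apply, TensorProduct.mk_apply,
        LinearMap.flip_apply]
      erw [mulFirst_rTensor]; rfl
    intro a
    induction a using TensorProduct.induction_on with
    | zero => erw [map_zero, map_zero, TensorProduct.tmul_zero]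
    | tmul h b => exact key h b
    | add a₁ a₂ h₁ h₂ => erw [map_add, map_add, h₁, h₂, TensorProduct.tmul_add]

-- ### the translation bijection on H ⊗ H

noncomputable def bMap : H ⊗[R] H →ₗ[R] H ⊗[R] H :=
  LinearMap.rTensor H (LinearMap.mul' R H) ∘ₗ (TensorProduct.assoc R H H H).symm.toLinearMap ∘ₗ
    LinearMap.lTensor H (Coalgebra.comul (R := R))

noncomputable def bMap' : H ⊗[R] H →ₗ[R] H ⊗[R] H :=
  LinearMap.rTensor H (LinearMap.mul' R H) ∘ₗ (TensorProduct.assoc R H H H).symm.toLinearMap ∘ₗ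
    LinearMap.lTensor H (LinearMap.rTensor H (antipode (R := R)) ∘ₗ Coalgebra.comul (R := R))

lemma bMap_tmul (h k : H) :
    bMap R H (h ⊗ₜ[R] k) = ∑ i ∈ (ℛ R k).index, (h * (ℛ R k).left i) ⊗ₜ[R] (ℛ R k).right i := by
  simp only [bMap, LinearMap.comp_apply, LinearMap.lTensor_tmul, LinearEquiv.coe_coe]
  rw [← (ℛ R k).eq]
  simp [TensorProduct.tmul_sum, map_sum, TensorProduct.assoc_symm_tmul]

lemma bMap'_tmul (h k : H) :
    bMap' R H (h ⊗ₜ[R] k) =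
      ∑ i ∈ (ℛ R k).index, (h * antipode (R := R) ((ℛ R k).left i)) ⊗ₜ[R] (ℛ R k).right i := by
  simp only [bMap', LinearMap.comp_apply, LinearMap.lTensor_tmul, LinearEquiv.coe_coe]
  rw [← (ℛ R k).eq]
  simp [TensorProduct.tmul_sum, map_sum, TensorProduct.assoc_symm_tmul]

lemma bMap_bMap' (z : H ⊗[R] H) : bMap R H (bMap' R H z) = z := by
  induction z using TensorProduct.induction_on with
  | zero => simp
  | tmul h k =>
    set Tm : H ⊗[R] (H ⊗[R] H) →ₗ[R] H ⊗[R] H :=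
      LinearMap.rTensor H (LinearMap.mulLeft R h ∘ₗ LinearMap.mul' R H ∘ₗ
        LinearMap.rTensor H (antipode (R := R))) ∘ₗ
        (TensorProduct.assoc R H H H).symm.toLinearMap with hTm
    have hTmt : ∀ x y z' : H, Tm (x ⊗ₜ[R] (y ⊗ₜ[R] z')) =
        (h * (antipode (R := R) x * y)) ⊗ₜ[R] z' := by
      intro x y z'
      simp [hTm, TensorProduct.assoc_symm_tmul]
    have key := Coalgebra.sum_tmul_tmul_eq (ℛ R k) (fun i => ℛ R ((ℛ R k).left i))
      (fun i => ℛ R ((ℛ R k).right i))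
    have key2 := congrArg Tm key
    simp only [map_sum, hTmt] at key2
    calc bMap R H (bMap' R H (h ⊗ₜ[R] k))
        = ∑ i ∈ (ℛ R k).index, ∑ j ∈ (ℛ R ((ℛ R k).right i)).index,
            ((h * antipode (R := R) ((ℛ R k).left i)) * (ℛ R ((ℛ R k).right i)).left j) ⊗ₜ[R]
              (ℛ R ((ℛ R k).right i)).right j := by
          rw [bMap'_tmul, map_sum]
          exact Finset.sum_congr rfl fun i _ => bMap_tmul R H _ _
      _ = ∑ i ∈ (ℛ R k).index, ∑ j ∈ (ℛ R ((ℛ R k).right i)).index,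
            (h * (antipode (R := R) ((ℛ R k).left i) * (ℛ R ((ℛ R k).right i)).left j)) ⊗ₜ[R]
              (ℛ R ((ℛ R k).right i)).right j := by
          exact Finset.sum_congr rfl fun i _ => Finset.sum_congr rfl fun j _ => by
            rw [mul_assoc]
      _ = ∑ i ∈ (ℛ R k).index, ∑ j ∈ (ℛ R ((ℛ R k).left i)).index,
            (h * (antipode (R := R) ((ℛ R ((ℛ R k).left i)).left j) *
              (ℛ R ((ℛ R k).left i)).right j)) ⊗ₜ[R] (ℛ R k).right i := key2.symm
      _ = ∑ i ∈ (ℛ R k).index,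
            (h * (Coalgebra.counit (R := R) ((ℛ R k).left i) • (1 : H))) ⊗ₜ[R]
              (ℛ R k).right i := by
          refine Finset.sum_congr rfl fun i _ => ?_
          rw [← TensorProduct.sum_tmul, ← Finset.mul_sum,
            HopfAlgebra.sum_antipode_mul_eq_smul (ℛ R ((ℛ R k).left i))]
      _ = ∑ i ∈ (ℛ R k).index,
            h ⊗ₜ[R] (Coalgebra.counit (R := R) ((ℛ R k).left i) • (ℛ R k).right i) := by
          refine Finset.sum_congr rfl fun i _ => ?_
          rw [mul_smul_comm, mul_one, TensorProduct.smul_tmul]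
      _ = h ⊗ₜ[R] k := by rw [← TensorProduct.tmul_sum, _root_.sum_counit_smul]
  | add z₁ z₂ h₁ h₂ => rw [map_add, map_add, h₁, h₂]

lemma bMap'_bMap (z : H ⊗[R] H) : bMap' R H (bMap R H z) = z := by
  induction z using TensorProduct.induction_on with
  | zero => simp
  | tmul h k =>
    set Tm : H ⊗[R] (H ⊗[R] H) →ₗ[R] H ⊗[R] H :=
      LinearMap.rTensor H (LinearMap.mulLeft R h ∘ₗ LinearMap.mul' R H ∘ₗ
        LinearMap.lTensor H (antipode (R := R))) ∘ₗ
        (TensorProduct.assoc R H H H).symm.toLinearMap with hTm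
    have hTmt : ∀ x y z' : H, Tm (x ⊗ₜ[R] (y ⊗ₜ[R] z')) =
        (h * (x * antipode (R := R) y)) ⊗ₜ[R] z' := by
      intro x y z'
      simp [hTm, TensorProduct.assoc_symm_tmul]
    have key := Coalgebra.sum_tmul_tmul_eq (ℛ R k) (fun i => ℛ R ((ℛ R k).left i))
      (fun i => ℛ R ((ℛ R k).right i))
    have key2 := congrArg Tm key
    simp only [map_sum, hTmt] at key2
    calc bMap' R H (bMap R H (h ⊗ₜ[R] k))
        = ∑ i ∈ (ℛ R k).index, ∑ j ∈ (ℛ R ((ℛ R k).right i)).index,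
            ((h * (ℛ R k).left i) * antipode (R := R) ((ℛ R ((ℛ R k).right i)).left j)) ⊗ₜ[R]
              (ℛ R ((ℛ R k).right i)).right j := by
          rw [bMap_tmul, map_sum]
          exact Finset.sum_congr rfl fun i _ => bMap'_tmul R H _ _
      _ = ∑ i ∈ (ℛ R k).index, ∑ j ∈ (ℛ R ((ℛ R k).right i)).index,
            (h * ((ℛ R k).left i * antipode (R := R) ((ℛ R ((ℛ R k).right i)).left j))) ⊗ₜ[R]
              (ℛ R ((ℛ R k).right i)).right j := by
          exact Finset.sum_congr rfl fun i _ => Finset.sum_congr rfl fun j _ => by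
            rw [mul_assoc]
      _ = ∑ i ∈ (ℛ R k).index, ∑ j ∈ (ℛ R ((ℛ R k).left i)).index,
            (h * ((ℛ R ((ℛ R k).left i)).left j *
              antipode (R := R) ((ℛ R ((ℛ R k).left i)).right j))) ⊗ₜ[R] (ℛ R k).right i :=
          key2.symm
      _ = ∑ i ∈ (ℛ R k).index,
            (h * (Coalgebra.counit (R := R) ((ℛ R k).left i) • (1 : H))) ⊗ₜ[R]
              (ℛ R k).right i := by
          refine Finset.sum_congr rfl fun i _ => ?_
          rw [← TensorProduct.sum_tmul, ← Finset.mul_sum,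
            HopfAlgebra.sum_mul_antipode_eq_smul (ℛ R ((ℛ R k).left i))]
      _ = ∑ i ∈ (ℛ R k).index,
            h ⊗ₜ[R] (Coalgebra.counit (R := R) ((ℛ R k).left i) • (ℛ R k).right i) := by
          refine Finset.sum_congr rfl fun i _ => ?_
          rw [mul_smul_comm, mul_one, TensorProduct.smul_tmul]
      _ = h ⊗ₜ[R] k := by rw [← TensorProduct.tmul_sum, _root_.sum_counit_smul]
  | add z₁ z₂ h₁ h₂ => rw [map_add, map_add, h₁, h₂]

-- ### the comodule isomorphism Φ

noncomputable def phiMap (n : ℕ) : (H ⊗[R] Tpow R H n) →ₗ[R] Tpow R H (n + 1) :=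
  mulFirst R H n ∘ₗ LinearMap.lTensor H (iotaMap R H n)

lemma phi_apply (n : ℕ) (h : H) (a : Tpow R H n) :
    phiMap R H n (h ⊗ₜ[R] a) =
      (LinearMap.mulLeft R h).rTensor (Tpow R H n) (iotaMap R H n a) := by
  simp only [phiMap, LinearMap.comp_apply, LinearMap.lTensor_tmul]
  erw [mulFirst_rTensor]

noncomputable def psiMap : (n : ℕ) → ((Tpow R H (n + 1)) →ₗ[R] H ⊗[R] Tpow R H n)
  | 0 => LinearMap.id
  | n + 1 =>
      (TensorProduct.assoc R H H (Tpow R H n)).toLinearMap ∘ₗ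
      LinearMap.rTensor (Tpow R H n) (bMap R H) ∘ₗ
      (TensorProduct.assoc R H H (Tpow R H n)).symm.toLinearMap ∘ₗ
      LinearMap.lTensor H (psiMap n)

lemma phi_zero (w : H ⊗[R] Tpow R H 0) : phiMap R H 0 w = w := by
  induction w using TensorProduct.induction_on with
  | zero => exact map_zero _
  | tmul h r =>
    erw [phi_apply, iota_zero, LinearMap.rTensor_tmul, LinearMap.mulLeft_apply]
    erw [← Algebra.commutes, ← Algebra.smul_def, TensorProduct.smul_tmul]
    erw [smul_eq_mul, mul_one]
  | add w₁ w₂ h₁ h₂ => rw [map_add, h₁, h₂]; rfl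

lemma psi_succ_apply (n : ℕ) (u : Tpow R H (n + 2)) :
    psiMap R H (n + 1) u =
      (TensorProduct.assoc R H H (Tpow R H n))
        ((LinearMap.rTensor (Tpow R H n) (bMap R H))
          ((TensorProduct.assoc R H H (Tpow R H n)).symm
            ((LinearMap.lTensor H (psiMap R H n)) u))) := rfl

lemma phi_succ_apply (n : ℕ) (u : H ⊗[R] Tpow R H (n + 1)) :
    phiMap R H (n + 1) u =
      (LinearMap.lTensor H (phiMap R H n))
        ((TensorProduct.assoc R H H (Tpow R H n))
          ((LinearMap.rTensor (Tpow R H n) (bMap' R H))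
            ((TensorProduct.assoc R H H (Tpow R H n)).symm u))) := by
  induction u using TensorProduct.induction_on with
  | zero => erw [map_zero]
  | tmul h z =>
    induction z using TensorProduct.induction_on with
    | zero => erw [TensorProduct.tmul_zero, map_zero]
    | tmul k a =>
      erw [phi_apply]; rw [iota_succ]; erw [map_sum]; erw [TensorProduct.assoc_symm_tmul]; rw [
        LinearMap.rTensor_tmul, bMap'_tmul, TensorProduct.sum_tmul, map_sum, map_sum]
      refine Finset.sum_congr rfl fun i _ => ?_
      erw [LinearMap.rTensor_tmul]; rw [LinearMap.mulLeft_apply, TensorProduct.assoc_tmul,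
        LinearMap.lTensor_tmul]; erw [phi_apply]
    | add z₁ z₂ h₁ h₂ =>
      erw [TensorProduct.tmul_add h z₁ z₂, LinearMap.map_add (phiMap R H (n + 1))]; erw [h₁, h₂]
      erw [LinearEquiv.map_add (TensorProduct.assoc R H H (Tpow R H n)).symm (h ⊗ₜ[R] z₁) (h ⊗ₜ[R] z₂)]
      simp only [map_add]
      rfl
  | add u₁ u₂ h₁ h₂ =>
    rw [map_add, h₁, h₂]; erw [LinearEquiv.map_add (TensorProduct.assoc R H H (Tpow R H n)).symm u₁ u₂]
    simp only [map_add]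
    rfl

lemma psi_phi (n : ℕ) (w : H ⊗[R] Tpow R H n) : psiMap R H n (phiMap R H n w) = w := by
  induction n with
  | zero => rw [phi_zero]; rfl
  | succ n ih =>
    rw [phi_succ_apply]; erw [psi_succ_apply]; rw [← LinearMap.lTensor_comp_apply]
    rw [show psiMap R H n ∘ₗ phiMap R H n = LinearMap.id from
      LinearMap.ext fun u => ih u, LinearMap.lTensor_id, LinearMap.id_apply]
    rw [LinearEquiv.symm_apply_apply, ← LinearMap.rTensor_comp_apply]
    rw [show bMap R H ∘ₗ bMap' R H = LinearMap.id from
      LinearMap.ext fun u => bMap_bMap' R H u, LinearMap.rTensor_id, LinearMap.id_apply]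
    exact LinearEquiv.apply_symm_apply _ _

lemma phi_psi (n : ℕ) (z : Tpow R H (n + 1)) : phiMap R H n (psiMap R H n z) = z := by
  induction n with
  | zero => show phiMap R H 0 z = z; exact phi_zero R H z
  | succ n ih =>
    rw [phi_succ_apply, psi_succ_apply, LinearEquiv.symm_apply_apply,
      ← LinearMap.rTensor_comp_apply]
    rw [show bMap' R H ∘ₗ bMap R H = LinearMap.id from
      LinearMap.ext fun u => bMap'_bMap R H u, LinearMap.rTensor_id, LinearMap.id_apply]
    rw [LinearEquiv.apply_symm_apply]; erw [← LinearMap.lTensor_comp_apply]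
    rw [show phiMap R H n ∘ₗ psiMap R H n = LinearMap.id from
      LinearMap.ext fun u => ih u, LinearMap.lTensor_id]; rfl

lemma lemmaC (n : ℕ) (w : H ⊗[R] Tpow R H n) :
    deltaMap R H (n + 1) (phiMap R H n w) =
      (LinearMap.lTensor H (phiMap R H n))
        ((TensorProduct.assoc R H H (Tpow R H n))
          ((LinearMap.rTensor (Tpow R H n) (Coalgebra.comul (R := R))) w)) := by
  induction w using TensorProduct.induction_on with
  | zero => simp
  | tmul h a =>
    rw [phi_apply]; erw [lemmaB]; rw [LinearMap.rTensor_tmul, ← (ℛ R h).eq, TensorProduct.sum_tmul,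
      map_sum, map_sum]
    refine Finset.sum_congr rfl fun i _ => ?_
    rw [lemmaA]; erw [TensorProduct.map_tmul]; rw [LinearMap.mulLeft_apply, mul_one,
      TensorProduct.assoc_tmul, LinearMap.lTensor_tmul]; erw [phi_apply]; rfl
  | add w₁ w₂ h₁ h₂ => rw [map_add, map_add, h₁, h₂, map_add, map_add, map_add]

lemma phi_one (n : ℕ) (a : Tpow R H n) :
    phiMap R H n ((1 : H) ⊗ₜ[R] a) = iotaMap R H n a := by
  rw [phi_apply, LinearMap.mulLeft_one, LinearMap.rTensor_id]; erw [LinearMap.id_apply]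

noncomputable def cwMap (n : ℕ) : (H ⊗[R] Tpow R H n) →ₗ[R] Tpow R H n :=
  (TensorProduct.lid R (Tpow R H n)).toLinearMap ∘ₗ
    LinearMap.rTensor (Tpow R H n) (Coalgebra.counit (R := R))

lemma cw_one (n : ℕ) (a : Tpow R H n) : cwMap R H n ((1 : H) ⊗ₜ[R] a) = a := by
  simp [cwMap, Bialgebra.counit_one]

noncomputable def c2Map : H ⊗[R] H →ₗ[R] H :=
  (TensorProduct.rid R H).toLinearMap ∘ₗ LinearMap.lTensor H (Coalgebra.counit (R := R))

lemma c2_comul : c2Map R H ∘ₗ (Coalgebra.comul (R := R) (A := H)) = LinearMap.id := by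
  apply LinearMap.ext
  intro x
  simp [c2Map, Coalgebra.lTensor_counit_comul]

lemma F_one (n : ℕ) (w : H ⊗[R] Tpow R H n) :
    (LinearMap.rTensor (Tpow R H n) (c2Map R H))
        ((TensorProduct.assoc R H H (Tpow R H n)).symm ((1 : H) ⊗ₜ[R] w)) =
      (1 : H) ⊗ₜ[R] (cwMap R H n w) := by
  induction w using TensorProduct.induction_on with
  | zero => simp
  | tmul h a =>
    rw [TensorProduct.assoc_symm_tmul, LinearMap.rTensor_tmul]
    have hc : c2Map R H ((1 : H) ⊗ₜ[R] h) = Coalgebra.counit (R := R) h • (1 : H) := by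
      simp [c2Map]
    have hw : cwMap R H n (h ⊗ₜ[R] a) = Coalgebra.counit (R := R) h • a := by
      simp [cwMap]
    rw [hc, hw, TensorProduct.smul_tmul]
  | add w₁ w₂ h₁ h₂ =>
    rw [TensorProduct.tmul_add, map_add, map_add, h₁, h₂, map_add, TensorProduct.tmul_add]

theorem iota_injective_range_coinvariants_aux (n : ℕ) :
    Function.Injective (iotaMap R H n) ∧
      ∀ z : Tpow R H (n + 1),
        z ∈ LinearMap.range (iotaMap R H n) ↔
          deltaMap R H (n + 1) z = (1 : H) ⊗ₜ[R] z := by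
  constructor
  · intro a b hab
    have h1 : phiMap R H n ((1 : H) ⊗ₜ[R] a) = phiMap R H n ((1 : H) ⊗ₜ[R] b) := by
      rw [phi_one, phi_one]; exact hab
    have h2 : (1 : H) ⊗ₜ[R] a = (1 : H) ⊗ₜ[R] b := by
      have := congrArg (psiMap R H n) h1
      rwa [psi_phi, psi_phi] at this
    have := congrArg (cwMap R H n) h2
    rwa [cw_one, cw_one] at this
  · intro z
    constructor
    · rintro ⟨a, rfl⟩
      exact lemmaA R H n a
    · intro hz
      obtain ⟨w, rfl⟩ : ∃ w : H ⊗[R] Tpow R H n, phiMap R H n w = z :=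
        ⟨psiMap R H n z, phi_psi R H n z⟩
      have h3 : (LinearMap.lTensor H (phiMap R H n))
          ((TensorProduct.assoc R H H (Tpow R H n))
            ((LinearMap.rTensor (Tpow R H n) (Coalgebra.comul (R := R))) w)) =
          (LinearMap.lTensor H (phiMap R H n)) ((1 : H) ⊗ₜ[R] w) := by
        rw [← lemmaC, hz, LinearMap.lTensor_tmul]
      have hE : (TensorProduct.assoc R H H (Tpow R H n))
          ((LinearMap.rTensor (Tpow R H n) (Coalgebra.comul (R := R))) w) =
          (1 : H) ⊗ₜ[R] w := by
        have h4 := congrArg (LinearMap.lTensor H (psiMap R H n)) h3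
        rwa [← LinearMap.lTensor_comp_apply, ← LinearMap.lTensor_comp_apply,
          show psiMap R H n ∘ₗ phiMap R H n = LinearMap.id from
            LinearMap.ext fun u => psi_phi R H n u,
          LinearMap.lTensor_id, LinearMap.id_apply, LinearMap.id_apply] at h4
      have h5 := congrArg (fun t => (LinearMap.rTensor (Tpow R H n) (c2Map R H))
        ((TensorProduct.assoc R H H (Tpow R H n)).symm t)) hE
      rw [LinearEquiv.symm_apply_apply, ← LinearMap.rTensor_comp_apply, c2_comul,
        LinearMap.rTensor_id, LinearMap.id_apply, F_one] at h5
      exact ⟨cwMap R H n w, by rw [← phi_one, ← h5]⟩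

/-- STATEMENT 7: for a commutative Hopf algebra `H`, the map `ι_n : H^{⊗(n-1)} → H^{⊗n}`
is injective and its image is exactly the set of coinvariants
`{z : δ(z) = 1 ⊗ z}` of the diagonal coaction; i.e. `ι_n` is an equalizer of `δ` and
`z ↦ 1 ⊗ z`. (Here `iotaMap R H n` is the paper's `ι_{n+1}` and `deltaMap R H (n+1)` the
paper's `δ_{n+1}`, so all `n ≥ 1` are covered.) -/
theorem iota_injective_range_coinvariants (n : ℕ) :
    Function.Injective (iotaMap R H n) ∧
      ∀ z : Tpow R H (n + 1),
        z ∈ LinearMap.range (iotaMap R H n) ↔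
          deltaMap R H (n + 1) z = (1 : H) ⊗ₜ[R] z := by
  exact iota_injective_range_coinvariants_aux R H n
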